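/- In RW(4,4) with λ-bracket [aᵢ_λ aⱼ] = (∂ᵢ+λᵢ)aⱼ + aᵢλⱼ, the element C_{∂a} = Σᵢ₌₁⁴(∂ᵢa_{i+4}+∂_{i+4}aᵢ) satisfies [C_{∂a} _λ C_{∂a}] = −(2B_{λλ} + C_{λ∂}) C_{∂a}, where B_{λλ} = Σᵢ₌₁⁴λᵢλ_{i+4} and C_{λ∂} = Σᵢ₌₁⁴(λᵢ∂_{i+4} + λ_{i+4}∂ᵢ). -/

import Mathlib

open scoped TensorProduct
open MvPolynomial

set_option synthInstance.maxHeartbeats 1000000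
set_option maxHeartbeats 1000000

noncomputable section

variable (F : Type) [Field F] [CharZero F]

/-- Even variables: `X (inl i) = ∂_{i+1}`, `X (inr i) = λ_{i+1}` (0-based). -/
abbrev PolyC := MvPolynomial (Fin 4 ⊕ Fin 4) F

/-- Odd variables: `inl i ↦ ∂_{i+5}`, `inr i ↦ λ_{i+5}` (0-based). -/
abbrev ExtC := ExteriorAlgebra F ((Fin 4 ⊕ Fin 4) → F)

/-- The supercommutative coefficient algebra `F[∂,λ] = F[∂₁,…,∂₄,λ₁,…,λ₄] ⊗
Λ(∂₅,…,∂₈,λ₅,…,λ₈)`, containing both `F[∂]` and the polynomial algebra in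
`λ`. -/
abbrev AC := ExtC F ⊗[F] PolyC F

/-- The variables `∂₁,…,∂₈` (0-based). -/
def delv (i : Fin 8) : AC F :=
  if h : (i : ℕ) < 4 then (1 : ExtC F) ⊗ₜ[F] (X (Sum.inl ⟨i, h⟩) : PolyC F)
  else (ExteriorAlgebra.ι F (Pi.single (Sum.inl ⟨(i : ℕ) - 4, by omega⟩) (1 : F)))
        ⊗ₜ[F] (1 : PolyC F)

/-- The variables `λ₁,…,λ₈` (0-based). -/
def lamv (i : Fin 8) : AC F :=
  if h : (i : ℕ) < 4 then (1 : ExtC F) ⊗ₜ[F] (X (Sum.inr ⟨i, h⟩) : PolyC F)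
  else (ExteriorAlgebra.ι F (Pi.single (Sum.inr ⟨(i : ℕ) - 4, by omega⟩) (1 : F)))
        ⊗ₜ[F] (1 : PolyC F)

/-- Parity of the index `i` (`true` = odd, for `i ∈ {5,…,8}`). -/
def pr8 (i : Fin 8) : Bool := decide (4 ≤ (i : ℕ))

/-- `(−1)^b`. -/
def sg (b : Bool) : ℤ := if b then -1 else 1

/-- `RW(4,4) ⊗ F[λ]`: the free module on the generators `a₁,…,a₈` with
coefficients in `F[∂,λ]`; elements are coefficient vectors `(c₁,…,c₈)`,
representing `Σᵢ cᵢ aᵢ` (coefficients written on the left). -/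
abbrev MC := Fin 8 → AC F

/-- The generators `a₁,…,a₈` (0-based; `a₁,…,a₄` even, `a₅,…,a₈` odd). -/
def av (i : Fin 8) : MC F := Pi.single i (1 : AC F)

/-- Right multiplication of an element of the free module by `∂ᵢ`
(Koszul signs from moving `∂ᵢ` past the generators `a_k`). -/
def rmulD (i : Fin 8) (v : MC F) : MC F :=
  fun k => sg (pr8 i && pr8 k) • (v k * delv F i)

/-- Right multiplication of an element of the free module by `λᵢ`. -/
def rmulL (i : Fin 8) (v : MC F) : MC F :=
  fun k => sg (pr8 i && pr8 k) • (v k * lamv F i)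

/-- The defining property of the `λ`-bracket of `RW(4,4)`:
`F`-bilinearity, the generator formula `[aᵢ_λ aⱼ] = (∂ᵢ+λᵢ)aⱼ + aᵢλⱼ`, and
the two sesquilinearity rules `[(∂ᵢa)_λ b] = −λᵢ[a_λ b]`,
`[a_λ (b∂ᵢ)] = [a_λ b](∂ᵢ+λᵢ)`.  These uniquely determine the bracket. -/
structure IsRWBracket (br : MC F →ₗ[F] MC F →ₗ[F] MC F) : Prop where
  gen_formula : ∀ i j : Fin 8,
    br (av F i) (av F j) =
      (delv F i + lamv F i) • av F j + sg (pr8 i && pr8 j) • (lamv F j • av F i)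
  sesq_left : ∀ (i : Fin 8) (u v : MC F),
    br (delv F i • u) v = -(lamv F i • br u v)
  sesq_right : ∀ (i : Fin 8) (u v : MC F),
    br u (rmulD F i v) = rmulD F i (br u v) + rmulL F i (br u v)

/-- `B_{λλ} = Σ_{i=1}^4 λᵢλ_{i+4}`. -/
def Bll : AC F := ∑ i : Fin 4, lamv F ⟨i, by omega⟩ * lamv F ⟨(i : ℕ) + 4, by omega⟩

/-- `C_{λ∂} = Σ_{i=1}^4 (λᵢ∂_{i+4} + λ_{i+4}∂ᵢ)`. -/
def Cld : AC F :=
  ∑ i : Fin 4, (lamv F ⟨i, by omega⟩ * delv F ⟨(i : ℕ) + 4, by omega⟩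
    + lamv F ⟨(i : ℕ) + 4, by omega⟩ * delv F ⟨i, by omega⟩)

/-- `C_{∂a} = Σ_{i=1}^4 (∂ᵢ a_{i+4} + ∂_{i+4} aᵢ)`. -/
def Cda : MC F :=
  ∑ i : Fin 4, (delv F ⟨i, by omega⟩ • av F ⟨(i : ℕ) + 4, by omega⟩
    + delv F ⟨(i : ℕ) + 4, by omega⟩ • av F ⟨i, by omega⟩)

end

set_option linter.unusedSectionVars false
noncomputable section AuxRW
variable (F : Type) [Field F] [CharZero F]

/-- even index embedding -/
def eI (i : Fin 4) : Fin 8 := ⟨(i : ℕ), by omega⟩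
/-- odd index embedding -/
def oI (i : Fin 4) : Fin 8 := ⟨(i : ℕ) + 4, by omega⟩

lemma pr8_eI (i : Fin 4) : pr8 (eI i) = false := by
  rw [pr8, decide_eq_false_iff_not]; show ¬ 4 ≤ (i : ℕ); omega

lemma pr8_oI (i : Fin 4) : pr8 (oI i) = true := by
  rw [pr8, decide_eq_true_eq]; show 4 ≤ (i : ℕ) + 4; omega

lemma sg_true : sg true = -1 := rfl
lemma sg_false : sg false = 1 := rfl

lemma delv_eI (i : Fin 4) :
    delv F (eI i) = (1 : ExtC F) ⊗ₜ[F] (X (Sum.inl i) : PolyC F) := by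
  rw [delv, dif_pos (show ((eI i : Fin 8) : ℕ) < 4 from i.isLt)]; rfl

lemma lamv_eI (i : Fin 4) :
    lamv F (eI i) = (1 : ExtC F) ⊗ₜ[F] (X (Sum.inr i) : PolyC F) := by
  rw [lamv, dif_pos (show ((eI i : Fin 8) : ℕ) < 4 from i.isLt)]; rfl

lemma delv_oI (i : Fin 4) :
    delv F (oI i) = (ExteriorAlgebra.ι F (Pi.single (Sum.inl i) (1 : F)))
      ⊗ₜ[F] (1 : PolyC F) := by
  rw [delv, dif_neg (show ¬ ((oI i : Fin 8) : ℕ) < 4 from Nat.not_lt.mpr (Nat.le_add_left 4 i))]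
  have h4 : ((oI i : Fin 8) : ℕ) - 4 = (i : ℕ) := by show (i:ℕ)+4-4 = (i:ℕ); omega
  simp only [h4, Fin.eta]

lemma lamv_oI (i : Fin 4) :
    lamv F (oI i) = (ExteriorAlgebra.ι F (Pi.single (Sum.inr i) (1 : F)))
      ⊗ₜ[F] (1 : PolyC F) := by
  rw [lamv, dif_neg (show ¬ ((oI i : Fin 8) : ℕ) < 4 from Nat.not_lt.mpr (Nat.le_add_left 4 i))]
  have h4 : ((oI i : Fin 8) : ℕ) - 4 = (i : ℕ) := by show (i:ℕ)+4-4 = (i:ℕ); omega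
  simp only [h4, Fin.eta]

/-- even generators are central -/
lemma even_central (q : PolyC F) (x : AC F) :
    ((1 : ExtC F) ⊗ₜ[F] q) * x = x * ((1 : ExtC F) ⊗ₜ[F] q) := by
  induction x using TensorProduct.induction_on with
  | zero => simp
  | tmul a p => simp [Algebra.TensorProduct.tmul_mul_tmul, mul_comm q p]
  | add a b ha hb => simp [mul_add, add_mul, ha, hb]

/-- odd generators anticommute -/
lemma odd_anticomm (y z : (Fin 4 ⊕ Fin 4) → F) :
    ((ExteriorAlgebra.ι F y) ⊗ₜ[F] (1 : PolyC F)) * ((ExteriorAlgebra.ι F z) ⊗ₜ[F] (1 : PolyC F))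
      = -(((ExteriorAlgebra.ι F z) ⊗ₜ[F] (1 : PolyC F)) * ((ExteriorAlgebra.ι F y) ⊗ₜ[F] (1 : PolyC F))) := by
  simp only [Algebra.TensorProduct.tmul_mul_tmul, mul_one]
  rw [eq_neg_of_add_eq_zero_left (ExteriorAlgebra.ι_add_mul_swap y z)]
  rw [TensorProduct.neg_tmul]

lemma comm_lamE (i : Fin 4) (x : AC F) : lamv F (eI i) * x = x * lamv F (eI i) := by
  rw [lamv_eI]; exact even_central F _ x

lemma comm_delE (i : Fin 4) (x : AC F) : delv F (eI i) * x = x * delv F (eI i) := by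
  rw [delv_eI]; exact even_central F _ x

lemma swap_ll (i j : Fin 4) :
    lamv F (oI i) * lamv F (oI j) = -(lamv F (oI j) * lamv F (oI i)) := by
  rw [lamv_oI, lamv_oI]; exact odd_anticomm F _ _

lemma swap_ld (i j : Fin 4) :
    lamv F (oI i) * delv F (oI j) = -(delv F (oI j) * lamv F (oI i)) := by
  rw [lamv_oI, delv_oI]; exact odd_anticomm F _ _

lemma swap_dl (i j : Fin 4) :
    delv F (oI i) * lamv F (oI j) = -(lamv F (oI j) * delv F (oI i)) := by
  rw [lamv_oI, delv_oI]; exact odd_anticomm F _ _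

/- ### robust re-proved algebra helpers (avoid instance-path unification issues) -/

lemma ac_neg_mul (x y : AC F) : -x * y = -(x*y) := neg_mul x y
lemma ac_mul_neg (x y : AC F) : x * -y = -(x*y) := mul_neg x y
lemma ac_mul_assoc (x y z : AC F) : x * y * z = x * (y * z) := mul_assoc x y z
lemma ac_mul_add (x y z : AC F) : x * (y + z) = x*y + x*z := mul_add x y z
lemma ac_add_mul (x y z : AC F) : (x + y) * z = x*z + y*z := add_mul x y z
lemma ac_one_mul (x : AC F) : (1 : AC F) * x = x := one_mul x
lemma ac_mul_one (x : AC F) : x * (1 : AC F) = x := mul_one x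
lemma ac_zero_mul (x : AC F) : (0 : AC F) * x = 0 := zero_mul x
lemma ac_mul_zero (x : AC F) : x * (0 : AC F) = 0 := mul_zero x
lemma ac_zsmul_eq (s : ℤ) (a : AC F) : s • a = (s : AC F) * a := zsmul_eq_mul a s
lemma ac_one_zsmul (a : AC F) : (1:ℤ) • a = a := one_zsmul a
lemma ac_negone_zsmul (a : AC F) : (-1:ℤ) • a = -a := neg_one_zsmul a
lemma ac_two_zsmul (a : AC F) : (2:ℤ) • a = a + a := two_zsmul a
lemma ac_zsmul_zero (s : ℤ) : s • (0 : AC F) = 0 := smul_zero s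
lemma ac_zsmul_neg (s : ℤ) (a : AC F) : s • (-a) = -(s • a) := smul_neg s a
lemma ac_intcast_comm (s : ℤ) (a : AC F) : (s : AC F) * a = a * (s : AC F) :=
  (Int.cast_commute s a).eq

lemma mc_smul_smul (c d : AC F) (x : MC F) : c • d • x = (c*d) • x := smul_smul c d x
lemma mc_smul_add (c : AC F) (x y : MC F) : c • (x + y) = c • x + c • y := smul_add c x y
lemma mc_smul_neg (c : AC F) (x : MC F) : c • (-x) = -(c • x) := smul_neg c x
lemma mc_add_smul (c d : AC F) (x : MC F) : (c + d) • x = c • x + d • x := add_smul c d x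
lemma mc_sub_smul (c d : AC F) (x : MC F) : (c - d) • x = c • x - d • x := sub_smul c d x
lemma mc_neg_smul (c : AC F) (x : MC F) : (-c) • x = -(c • x) := neg_smul c x
lemma mc_one_zsmul (x : MC F) : (1:ℤ) • x = x := one_zsmul x
lemma mc_negone_zsmul (x : MC F) : (-1:ℤ) • x = -x := neg_one_zsmul x

lemma comm_left {a b : AC F} (h : a * b = b * a) (c : AC F) :
    a * (b * c) = b * (a * c) := by rw [← ac_mul_assoc, h, ac_mul_assoc]

lemma acomm_left {a b : AC F} (h : a * b = -(b * a)) (c : AC F) :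
    a * (b * c) = -(b * (a * c)) := by
  rw [← ac_mul_assoc, h, ac_neg_mul, ac_mul_assoc]

/-- the i-th summand of `C_{∂a}` -/
def tt (i : Fin 4) : MC F := delv F (eI i) • av F (oI i) + delv F (oI i) • av F (eI i)

/-- the i-th summand of `2B_{λλ} + C_{λ∂}` -/
def ss (i : Fin 4) : AC F :=
  lamv F (eI i) * delv F (oI i) + lamv F (oI i) * delv F (eI i)
    + (lamv F (eI i) * lamv F (oI i) + lamv F (eI i) * lamv F (oI i))

def YY (i j : Fin 4) : MC F :=
  (ss F i * lamv F (eI j)) • av F (oI j) + (ss F i * lamv F (oI j)) • av F (eI j)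

lemma av_same (n : Fin 8) : av F n n = 1 := by
  rw [av]; exact Pi.single_eq_same n 1

lemma av_ne {n k : Fin 8} (h : k ≠ n) : av F n k = 0 := by
  rw [av]; exact Pi.single_eq_of_ne h 1

lemma rmulD_add (q : Fin 8) (v w : MC F) :
    rmulD F q (v + w) = rmulD F q v + rmulD F q w := by
  funext k
  show sg (pr8 q && pr8 k) • ((v k + w k) * delv F q) = _
  rw [ac_add_mul]
  exact smul_add _ _ _

lemma rmulL_add (q : Fin 8) (v w : MC F) :
    rmulL F q (v + w) = rmulL F q v + rmulL F q w := by
  funext k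
  show sg (pr8 q && pr8 k) • ((v k + w k) * lamv F q) = _
  rw [ac_add_mul]
  exact smul_add _ _ _

lemma rmulD_neg (q : Fin 8) (v : MC F) : rmulD F q (-v) = -(rmulD F q v) := by
  funext k
  show sg (pr8 q && pr8 k) • (-(v k) * delv F q) = -(sg (pr8 q && pr8 k) • (v k * delv F q))
  rw [ac_neg_mul, ac_zsmul_neg]

lemma rmulL_neg (q : Fin 8) (v : MC F) : rmulL F q (-v) = -(rmulL F q v) := by
  funext k
  show sg (pr8 q && pr8 k) • (-(v k) * lamv F q) = -(sg (pr8 q && pr8 k) • (v k * lamv F q))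
  rw [ac_neg_mul, ac_zsmul_neg]

lemma rmulD_smul (q : Fin 8) (c : AC F) (v : MC F) :
    rmulD F q (c • v) = c • rmulD F q v := by
  funext k
  show sg (pr8 q && pr8 k) • ((c * v k) * delv F q)
      = c * (sg (pr8 q && pr8 k) • (v k * delv F q))
  rw [ac_zsmul_eq, ac_zsmul_eq, ← ac_mul_assoc, ← ac_mul_assoc, ac_intcast_comm]
  simp only [ac_mul_assoc]

lemma rmulL_smul (q : Fin 8) (c : AC F) (v : MC F) :
    rmulL F q (c • v) = c • rmulL F q v := by
  funext k
  show sg (pr8 q && pr8 k) • ((c * v k) * lamv F q)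
      = c * (sg (pr8 q && pr8 k) • (v k * lamv F q))
  rw [ac_zsmul_eq, ac_zsmul_eq, ← ac_mul_assoc, ← ac_mul_assoc, ac_intcast_comm]
  simp only [ac_mul_assoc]

lemma rmulD_av (q n : Fin 8) :
    rmulD F q (av F n) = sg (pr8 q && pr8 n) • (delv F q • av F n) := by
  funext k
  by_cases hk : k = n
  · subst hk
    show sg (pr8 q && pr8 k) • (av F k k * delv F q)
        = sg (pr8 q && pr8 k) • (delv F q * av F k k)
    rw [av_same, ac_one_mul, ac_mul_one]
  · show sg (pr8 q && pr8 k) • (av F n k * delv F q)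
        = sg (pr8 q && pr8 n) • (delv F q * av F n k)
    rw [av_ne F hk, ac_zero_mul, ac_mul_zero, ac_zsmul_zero, ac_zsmul_zero]

lemma rmulL_av (q n : Fin 8) :
    rmulL F q (av F n) = sg (pr8 q && pr8 n) • (lamv F q • av F n) := by
  funext k
  by_cases hk : k = n
  · subst hk
    show sg (pr8 q && pr8 k) • (av F k k * lamv F q)
        = sg (pr8 q && pr8 k) • (lamv F q * av F k k)
    rw [av_same, ac_one_mul, ac_mul_one]
  · show sg (pr8 q && pr8 k) • (av F n k * lamv F q)
        = sg (pr8 q && pr8 n) • (lamv F q * av F n k)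
    rw [av_ne F hk, ac_zero_mul, ac_mul_zero, ac_zsmul_zero, ac_zsmul_zero]

lemma coreL (i : Fin 4) (Z : AC F) :
    ss F i * Z = lamv F (eI i) * ((delv F (oI i) + lamv F (oI i)) * Z)
      + lamv F (oI i) * ((delv F (eI i) + lamv F (eI i)) * Z) := by
  rw [ss]
  simp only [ac_add_mul, ac_mul_add, ac_mul_assoc]
  rw [comm_left F ((comm_lamE F i (lamv F (oI i))).symm) Z]
  abel

lemma core5 (i j : Fin 4) :
    ss F j * lamv F (eI i)
      = lamv F (eI i) * (lamv F (oI j) * delv F (eI j))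
      + lamv F (eI i) * (lamv F (oI j) * lamv F (eI j))
      + lamv F (eI i) * (lamv F (eI j) * delv F (oI j))
      + lamv F (eI i) * (lamv F (eI j) * lamv F (oI j)) := by
  rw [← comm_lamE F i (ss F j)]
  rw [ss]
  simp only [ac_mul_add]
  rw [show lamv F (oI j) * lamv F (eI j) = lamv F (eI j) * lamv F (oI j) from
    (comm_lamE F j (lamv F (oI j))).symm]
  abel

lemma core6 (i j : Fin 4) :
    ss F j * lamv F (oI i)
      = -(lamv F (oI i) * (lamv F (oI j) * delv F (eI j)))
      - lamv F (oI i) * (lamv F (oI j) * lamv F (eI j))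
      - lamv F (oI i) * (lamv F (eI j) * delv F (oI j))
      - lamv F (oI i) * (lamv F (eI j) * lamv F (oI j)) := by
  rw [ss]
  simp only [ac_add_mul, ac_mul_assoc]
  rw [show delv F (oI j) * lamv F (oI i) = -(lamv F (oI i) * delv F (oI j)) from swap_dl F j i]
  rw [show delv F (eI j) * lamv F (oI i) = lamv F (oI i) * delv F (eI j) from comm_delE F j _]
  rw [show lamv F (oI j) * lamv F (oI i) = -(lamv F (oI i) * lamv F (oI j)) from swap_ll F j i]
  simp only [ac_mul_neg]
  rw [comm_left F (comm_lamE F j (lamv F (oI i))) (delv F (oI j))]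
  rw [comm_left F (comm_lamE F j (lamv F (oI i))) (lamv F (oI j))]
  rw [acomm_left F (swap_ll F j i) (delv F (eI j))]
  rw [show lamv F (oI j) * lamv F (eI j) = lamv F (eI j) * lamv F (oI j) from
    (comm_lamE F j (lamv F (oI j))).symm]
  abel

lemma pairKey (br : MC F →ₗ[F] MC F →ₗ[F] MC F) (hbr : IsRWBracket F br) (i j : Fin 4) :
    br (tt F i) (tt F j) + YY F i j = -(ss F i • tt F j) + YY F j i := by
  have hEO : (pr8 (eI j) && pr8 (oI j)) = false := by rw [pr8_eI]; rfl
  have hOE : (pr8 (oI j) && pr8 (eI j)) = false := by rw [pr8_eI, pr8_oI]; rfl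
  have htj : tt F j = rmulD F (eI j) (av F (oI j)) + rmulD F (oI j) (av F (eI j)) := by
    rw [tt, rmulD_av, rmulD_av, hEO, hOE, sg_false, mc_one_zsmul, mc_one_zsmul]
  conv_lhs => rw [htj]
  rw [tt]
  simp only [map_add, LinearMap.add_apply]
  simp only [hbr.sesq_right]
  simp only [hbr.sesq_left]
  simp only [hbr.gen_formula]
  simp only [rmulD_add, rmulL_add, rmulD_neg, rmulL_neg, rmulD_smul, rmulL_smul,
    mc_smul_add, mc_smul_neg]
  simp only [rmulD_av, rmulL_av]
  simp only [pr8_eI, pr8_oI, Bool.and_false, Bool.false_and, Bool.and_true, Bool.true_and,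
    Bool.and_self, sg_false, sg_true, mc_one_zsmul, mc_negone_zsmul]
  simp only [rmulD_add, rmulL_add, rmulD_neg, rmulL_neg, rmulD_smul, rmulL_smul,
    rmulD_av, rmulL_av, mc_smul_add, mc_smul_neg]
  simp only [pr8_eI, pr8_oI, Bool.and_false, Bool.false_and, Bool.and_true, Bool.true_and,
    Bool.and_self, sg_false, sg_true, mc_one_zsmul, mc_negone_zsmul]
  simp only [mc_smul_neg, mc_smul_smul]
  rw [tt]
  simp only [mc_smul_add, mc_smul_smul]
  rw [YY, YY]
  rw [coreL F i (delv F (eI j)), coreL F i (lamv F (eI j)), coreL F i (delv F (oI j)),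
      coreL F i (lamv F (oI j)), core5 F i j, core6 F i j]
  simp only [mc_add_smul, mc_sub_smul, mc_neg_smul]
  abel

end AuxRW


/-- In `RW(4,4)`:
`[C_{∂a} λ C_{∂a}] = −(2B_{λλ} + C_{λ∂}) C_{∂a}`. -/
theorem stmt18 (F : Type) [Field F] [CharZero F]
    (br : MC F →ₗ[F] MC F →ₗ[F] MC F) (hbr : IsRWBracket F br) :
    br (Cda F) (Cda F) = -(((2 : ℤ) • Bll F + Cld F) • Cda F) := by
  classical
  have hC : Cda F = ∑ i : Fin 4, tt F i := by
    rw [Cda]; exact Finset.sum_congr rfl fun i _ => rfl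
  have hS : (2 : ℤ) • Bll F + Cld F = ∑ j : Fin 4, ss F j := by
    rw [Bll, Cld, Finset.smul_sum, ← Finset.sum_add_distrib]
    refine Finset.sum_congr rfl fun i _ => ?_
    show (2:ℤ) • (lamv F (eI i) * lamv F (oI i))
        + (lamv F (eI i) * delv F (oI i) + lamv F (oI i) * delv F (eI i)) = ss F i
    rw [ac_two_zsmul, ss]
    abel
  have expand : br (Cda F) (Cda F) = ∑ i : Fin 4, ∑ j : Fin 4, br (tt F i) (tt F j) := by
    rw [hC, map_sum br (tt F) Finset.univ, LinearMap.sum_apply]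
    exact Finset.sum_congr rfl fun i _ => map_sum (br (tt F i)) _ _
  have h1 : ∑ i : Fin 4, ∑ j : Fin 4, (br (tt F i) (tt F j) + YY F i j)
      = ∑ i : Fin 4, ∑ j : Fin 4, (-(ss F i • tt F j) + YY F j i) :=
    Finset.sum_congr rfl fun i _ => Finset.sum_congr rfl fun j _ => pairKey F br hbr i j
  have hYY : ∑ i : Fin 4, ∑ j : Fin 4, YY F j i = ∑ i : Fin 4, ∑ j : Fin 4, YY F i j :=
    Finset.sum_comm
  have split : ∀ f g : Fin 4 → Fin 4 → MC F,
      ∑ i : Fin 4, ∑ j : Fin 4, (f i j + g i j)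
        = (∑ i : Fin 4, ∑ j : Fin 4, f i j) + ∑ i : Fin 4, ∑ j : Fin 4, g i j := by
    intro f g
    rw [← Finset.sum_add_distrib]
    exact Finset.sum_congr rfl fun i _ => Finset.sum_add_distrib
  rw [split, split] at h1
  rw [hYY] at h1
  have h2 : ∑ i : Fin 4, ∑ j : Fin 4, br (tt F i) (tt F j)
      = ∑ i : Fin 4, ∑ j : Fin 4, -(ss F i • tt F j) := add_right_cancel h1
  have h3 : ∑ i : Fin 4, ∑ j : Fin 4, -(ss F i • tt F j)
      = -(((2 : ℤ) • Bll F + Cld F) • Cda F) := by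
    rw [hS, hC]
    calc ∑ i : Fin 4, ∑ j : Fin 4, -(ss F i • tt F j)
        = ∑ i : Fin 4, -(ss F i • ∑ j : Fin 4, tt F j) := Finset.sum_congr rfl fun i _ => by
          rw [Finset.smul_sum, Finset.sum_neg_distrib]
      _ = -(∑ i : Fin 4, ss F i • ∑ j : Fin 4, tt F j) := Finset.sum_neg_distrib _
      _ = -((∑ i : Fin 4, ss F i) • ∑ j : Fin 4, tt F j) := by rw [Finset.sum_smul]
  rw [expand, h2, h3]
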